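/- If φ is an analytic self-map of the unit disk D with φ(0) = 0, φ univalent, and C_φ is an isometry on the harmonic Bloch space HB(1), then φ is a rotation. -/

import Mathlib

open Complex Metric Set Filter
noncomputable section

/-- The open unit disk in `ℂ`. -/
def unitDisk : Set ℂ := Metric.ball (0 : ℂ) 1

/-- The set of values `(1-|z|²)^α (|f_z(z)| + |f_z̄(z)|)` for `z` in the unit disk, where the
harmonic function is `f = h + conj g` with `h, g` analytic, so `f_z = h'` and `f_z̄ = conj g'`. -/
def hbSet (α : ℝ) (h g : ℂ → ℂ) : Set ℝ :=
  (fun z => (1 - ‖z‖ ^ 2) ^ α *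
    (‖deriv h z‖ + ‖deriv g z‖)) '' unitDisk

/-- The harmonic α-Bloch seminorm `‖f‖_{HB(α)}` of `f = h + conj g`. -/
def hbSemi (α : ℝ) (h g : ℂ → ℂ) : ℝ := sSup (hbSet α h g)

/-- The harmonic α-Bloch norm `|||f|||_{HB(α)} = |f(0)| + ‖f‖_{HB(α)}` of `f = h + conj g`. -/
def hbNorm (α : ℝ) (h g : ℂ → ℂ) : ℝ :=
  ‖h 0 + (starRingEnd ℂ) (g 0)‖ + hbSemi α h g

/-- An analytic self-map of the unit disk. -/
def IsSelfMap (φ : ℂ → ℂ) : Prop :=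
  DifferentiableOn ℂ φ unitDisk ∧ MapsTo φ unitDisk unitDisk

/-- `f = h + conj g` is a harmonic α-Bloch function: `h, g` analytic on the disk and the
Bloch quantity is bounded. -/
def IsHB (α : ℝ) (h g : ℂ → ℂ) : Prop :=
  DifferentiableOn ℂ h unitDisk ∧ DifferentiableOn ℂ g unitDisk ∧ BddAbove (hbSet α h g)

/-- The composition operator `C_φ` is an isometry on `HB(α)`: `|||f∘φ||| = |||f|||` for every
harmonic α-Bloch function `f = h + conj g` (note `f ∘ φ = h∘φ + conj (g∘φ)`). -/
def IsIsometryOn (α : ℝ) (φ : ℂ → ℂ) : Prop :=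
  ∀ h g : ℂ → ℂ, IsHB α h g → hbNorm α (h ∘ φ) (g ∘ φ) = hbNorm α h g

/-- `φ` is a rotation of the unit disk. -/
def IsRotation (φ : ℂ → ℂ) : Prop :=
  ∃ lam : ℂ, ‖lam‖ = 1 ∧ ∀ z ∈ unitDisk, φ z = lam * z

/-- `τ_φ(z) = (1-|z|²)|φ'(z)| / (1-|φ(z)|²)`. -/
def tauPhi (φ : ℂ → ℂ) (z : ℂ) : ℝ :=
  (1 - ‖z‖ ^ 2) * ‖deriv φ z‖ / (1 - ‖φ z‖ ^ 2)

/-!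
Testing the isometry on `f(z) = z` gives `sup_z (1 - |z|²)|φ'(z)| = 1`. By Schwarz–Pick,
`(1 - |z|²)|φ'(z)| ≤ 1 - |φ(z)|²`, so along a maximizing sequence `φ(z_n) → 0`. A univalent
analytic map is open, so its inverse is continuous and `z_n → 0`; hence `|φ'(0)| = 1`, and the
equality case of the Schwarz lemma makes `φ` a rotation.
-/

open scoped ComplexConjugate Topology

def mobius (a w : ℂ) : ℂ := (w - a) / (1 - conj a * w)

section Mobius

variable {a w : ℂ}

lemma mobius_denom_ne_zero (ha : ‖a‖ < 1) (hw : ‖w‖ < 1) : 1 - conj a * w ≠ 0 := by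
  intro h
  have : ‖conj a * w‖ < 1 := by
    rw [norm_mul, Complex.norm_conj]
    nlinarith [norm_nonneg a, norm_nonneg w]
  rw [← sub_eq_zero.mp h, norm_one] at this
  exact this.false

lemma mobius_self : mobius a a = 0 := by simp [mobius]

lemma mobius_neg_zero : mobius (-a) 0 = a := by simp [mobius]

lemma mapsTo_mobius (ha : ‖a‖ < 1) : MapsTo (mobius a) (ball 0 1) (ball 0 1) := by
  intro w hw
  rw [mem_ball_zero_iff] at hw ⊢
  have hne := mobius_denom_ne_zero ha hw
  have key : normSq (1 - conj a * w) - normSq (w - a) = (1 - normSq a) * (1 - normSq w) := by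
    simp only [normSq_apply, sub_re, sub_im, mul_re, mul_im, one_re, one_im, conj_re, conj_im]
    ring
  rw [mobius, norm_div, div_lt_one (norm_pos_iff.mpr hne), ← sq_lt_sq₀ (norm_nonneg _)
    (norm_nonneg _), ← normSq_eq_norm_sq, ← normSq_eq_norm_sq]
  rw [← sq_lt_one_iff₀ (norm_nonneg _), ← normSq_eq_norm_sq] at ha hw
  nlinarith

lemma hasDerivAt_mobius (ha : ‖a‖ < 1) (hw : ‖w‖ < 1) :
    HasDerivAt (mobius a) ((1 - conj a * a) / (1 - conj a * w) ^ 2) w := by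
  have hnum : HasDerivAt (fun w => w - a) 1 w := (hasDerivAt_id' w).sub_const a
  have hden : HasDerivAt (fun w => 1 - conj a * w) (-conj a) w := by
    simpa using ((hasDerivAt_id' w).const_mul (conj a)).const_sub 1
  exact (hnum.div hden (mobius_denom_ne_zero ha hw)).congr_deriv (by ring)

lemma hasDerivAt_mobius_self (ha : ‖a‖ < 1) :
    HasDerivAt (mobius a) ((1 - ‖a‖ ^ 2 : ℝ) : ℂ)⁻¹ a := by
  have hne : (1 : ℂ) - ‖a‖ ^ 2 ≠ 0 := by
    rw [← conj_mul']; exact mobius_denom_ne_zero ha ha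
  convert hasDerivAt_mobius ha ha using 1
  rw [conj_mul']
  push_cast
  field_simp

lemma hasDerivAt_mobius_neg_zero (ha : ‖a‖ < 1) :
    HasDerivAt (mobius (-a)) ((1 - ‖a‖ ^ 2 : ℝ) : ℂ) 0 := by
  convert hasDerivAt_mobius (a := -a) (w := 0) (by rwa [norm_neg]) (by simp) using 1
  simp [conj_mul']

end Mobius

theorem one_sub_sq_norm_mul_norm_deriv_le_of_mapsTo_ball {φ : ℂ → ℂ}
    (hd : DifferentiableOn ℂ φ (ball 0 1)) (hm : MapsTo φ (ball 0 1) (ball 0 1)) {z : ℂ}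
    (hz : z ∈ ball (0 : ℂ) 1) :
    (1 - ‖z‖ ^ 2) * ‖deriv φ z‖ ≤ 1 - ‖φ z‖ ^ 2 := by
  set a := φ z
  have ha : ‖a‖ < 1 := mem_ball_zero_iff.mp (hm hz)
  have hz₁ : ‖z‖ < 1 := mem_ball_zero_iff.mp hz
  have hz' : ‖-z‖ < 1 := by rwa [norm_neg]
  have hM : MapsTo (mobius (-z)) (ball 0 1) (ball 0 1) := mapsTo_mobius hz'
  -- conjugating by disk automorphisms reduces to the Schwarz lemma at `0`
  set g := mobius a ∘ φ ∘ mobius (-z)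
  have hgd : DifferentiableOn ℂ g (ball 0 1) := fun w hw =>
    (((hasDerivAt_mobius ha (mem_ball_zero_iff.mp (hm (hM hw)))).differentiableAt.comp _
      (hd.differentiableAt (isOpen_ball.mem_nhds (hM hw)))).comp _
      (hasDerivAt_mobius hz' (mem_ball_zero_iff.mp hw)).differentiableAt).differentiableWithinAt
  have hg0 : g 0 = 0 := by simp only [g, Function.comp_apply, mobius_neg_zero, mobius_self, a]
  have hgm : MapsTo g (ball 0 1) (closedBall (g 0) 1) := by
    rw [hg0]
    exact ((mapsTo_mobius ha).comp (hm.comp hM)).mono_right ball_subset_closedBall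
  have hg' : HasDerivAt g
      (((1 - ‖a‖ ^ 2 : ℝ) : ℂ)⁻¹ * (deriv φ z * ((1 - ‖z‖ ^ 2 : ℝ) : ℂ))) 0 :=
    (hasDerivAt_mobius_self ha).comp_of_eq 0
      ((hd.hasDerivAt (isOpen_ball.mem_nhds hz)).comp_of_eq 0 (hasDerivAt_mobius_neg_zero hz₁)
        mobius_neg_zero.symm) (by simp only [Function.comp_apply, mobius_neg_zero, a])
  have hle := norm_deriv_le_one_of_mapsTo_ball hgd hgm one_pos
  have hapos : 0 < 1 - ‖a‖ ^ 2 := by nlinarith [norm_nonneg a]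
  have hzpos : 0 ≤ 1 - ‖z‖ ^ 2 := by nlinarith [norm_nonneg z]
  rw [hg'.deriv, norm_mul, norm_mul, norm_inv, norm_real, norm_real, Real.norm_of_nonneg hapos.le,
    Real.norm_of_nonneg hzpos, inv_mul_le_iff₀ hapos, mul_one] at hle
  linarith

theorem Set.InjOn.tendsto_nhds_of_tendsto_comp {X Y ι : Type*} [TopologicalSpace X]
    [TopologicalSpace Y] {f : X → Y} {U : Set X} (hf : InjOn f U)
    (hopen : ∀ V ⊆ U, IsOpen V → IsOpen (f '' V)) (hU : IsOpen U) {a : X} (ha : a ∈ U)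
    {l : Filter ι} {x : ι → X} (hxU : ∀ᶠ n in l, x n ∈ U) (hfx : Tendsto (f ∘ x) l (𝓝 (f a))) :
    Tendsto x l (𝓝 a) := by
  rw [(nhds_basis_opens a).tendsto_right_iff]
  rintro V ⟨haV, hV⟩
  have hfV : f '' (V ∩ U) ∈ 𝓝 (f a) :=
    (hopen _ inter_subset_right (hV.inter hU)).mem_nhds ⟨a, ⟨haV, ha⟩, rfl⟩
  filter_upwards [hfx.eventually_mem hfV, hxU] with n ⟨y, ⟨hyV, hyU⟩, hy⟩ hn
  exact hf hyU hn hy ▸ hyV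

theorem Set.InjOn.isOpen_image_of_analyticOnNhd {f : ℂ → ℂ} {U V : Set ℂ} (hinj : InjOn f U)
    (hf : AnalyticOnNhd ℂ f U) (hU : IsPreconnected U) (hnt : U.Nontrivial) (hVU : V ⊆ U)
    (hV : IsOpen V) : IsOpen (f '' V) := by
  refine (hf.is_constant_or_isOpen hU).resolve_left ?_ V hVU hV
  rintro ⟨w, hw⟩
  obtain ⟨x, hx, y, hy, hxy⟩ := hnt
  exact hxy (hinj hx hy (by rw [hw x hx, hw y hy]))

lemma mem_unitDisk {z : ℂ} : z ∈ unitDisk ↔ ‖z‖ < 1 := mem_ball_zero_iff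

lemma zero_mem_unitDisk : (0 : ℂ) ∈ unitDisk := mem_unitDisk.mpr (by simp)

lemma unitDisk_nontrivial : unitDisk.Nontrivial :=
  ⟨0, zero_mem_unitDisk, 1 / 2, mem_unitDisk.mpr (by norm_num), by norm_num⟩

lemma hbSet_one_const_zero (f : ℂ → ℂ) :
    hbSet 1 f (fun _ => 0) = (fun z => (1 - ‖z‖ ^ 2) * ‖deriv f z‖) '' unitDisk := by
  simp only [hbSet, Real.rpow_one, deriv_const', norm_zero, add_zero]

lemma isGreatest_hbSet_one_id : IsGreatest (hbSet 1 id fun _ => 0) 1 := by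
  rw [hbSet_one_const_zero]
  refine ⟨⟨0, zero_mem_unitDisk, by simp⟩, ?_⟩
  rintro _ ⟨z, -, rfl⟩
  simp only [deriv_id, norm_one, mul_one]
  nlinarith [norm_nonneg z]

lemma isHB_one_id : IsHB 1 id fun _ => 0 :=
  ⟨differentiableOn_id, differentiableOn_const 0, isGreatest_hbSet_one_id.bddAbove⟩

lemma hbNorm_one_id : hbNorm 1 id (fun _ => 0) = 1 := by
  simp [hbNorm, hbSemi, isGreatest_hbSet_one_id.csSup_eq]

lemma IsIsometryOn.hbSemi_one_eq_one {φ : ℂ → ℂ} (hiso : IsIsometryOn 1 φ) (h0 : φ 0 = 0) :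
    hbSemi 1 φ (fun _ => 0) = 1 := by
  have := hiso id (fun _ => 0) isHB_one_id
  rw [hbNorm_one_id] at this
  simpa [hbNorm, Function.comp_def, h0] using this

theorem norm_deriv_zero_eq_one_of_hbSemi_eq_one {φ : ℂ → ℂ} (hφ : IsSelfMap φ) (h0 : φ 0 = 0)
    (hinj : InjOn φ unitDisk) (hsemi : hbSemi 1 φ (fun _ => 0) = 1) : ‖deriv φ 0‖ = 1 := by
  obtain ⟨hd, hm⟩ := hφ
  set u : ℂ → ℝ := fun z => (1 - ‖z‖ ^ 2) * ‖deriv φ z‖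
  have hu : ∀ z ∈ unitDisk, u z ≤ 1 - ‖φ z‖ ^ 2 := fun z hz =>
    one_sub_sq_norm_mul_norm_deriv_le_of_mapsTo_ball hd hm hz
  have hbdd : BddAbove (u '' unitDisk) := ⟨1, by
    rintro _ ⟨z, hz, rfl⟩
    nlinarith [hu z hz, sq_nonneg ‖φ z‖]⟩
  rw [hbSemi, hbSet_one_const_zero] at hsemi
  obtain ⟨y, -, hy, hyu⟩ :=
    exists_seq_tendsto_sSup (Set.Nonempty.image u ⟨0, zero_mem_unitDisk⟩) hbdd
  choose z hz hzy using hyu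
  rw [hsemi] at hy
  -- by Schwarz–Pick, points where `u` is almost `1` are mapped near `0`
  have hφz : Tendsto (φ ∘ z) atTop (𝓝 (φ 0)) := by
    rw [h0, tendsto_zero_iff_norm_tendsto_zero]
    have hsqrt : Tendsto (fun n => √(1 - y n)) atTop (𝓝 0) := by
      simpa using ((tendsto_const_nhds (x := (1 : ℝ))).sub hy).sqrt
    refine squeeze_zero (fun n => norm_nonneg _) (fun n => ?_) hsqrt
    have := hu _ (hz n)
    rw [hzy n] at this
    exact Real.le_sqrt_of_sq_le (by simp only [Function.comp_apply]; linarith)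
  have hz0 : Tendsto z atTop (𝓝 0) :=
    hinj.tendsto_nhds_of_tendsto_comp
      (fun _ => hinj.isOpen_image_of_analyticOnNhd (hd.analyticOnNhd isOpen_ball)
        (convex_ball 0 1).isPreconnected unitDisk_nontrivial)
      isOpen_ball zero_mem_unitDisk (Eventually.of_forall hz) hφz
  have hu0 : ContinuousAt u 0 := by
    have := ((hd.analyticOnNhd isOpen_ball).deriv 0 zero_mem_unitDisk).continuousAt
    fun_prop
  have := tendsto_nhds_unique (hu0.tendsto.comp hz0) (by simpa [Function.comp_def, hzy] using hy)
  simpa [u] using this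

theorem isRotation_of_norm_deriv_zero_eq_one {φ : ℂ → ℂ} (hφ : IsSelfMap φ) (h0 : φ 0 = 0)
    (h1 : ‖deriv φ 0‖ = 1) : IsRotation φ := by
  obtain ⟨hd, hm⟩ := hφ
  have hmaps : MapsTo φ (ball 0 1) (closedBall (φ 0) 1) := by
    rw [h0]
    exact hm.mono_right ball_subset_closedBall
  have haff := Complex.affine_of_mapsTo_ball_of_norm_dslope_eq_div hd hmaps (mem_ball_self one_pos)
    (by rw [dslope_same, h1, div_one])
  refine ⟨deriv φ 0, h1, fun z hz => ?_⟩
  simpa [h0, dslope_same, mul_comm] using haff hz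

/-- if `φ` is a univalent analytic self-map of the disk with `φ(0) = 0` and `C_φ`
is an isometry on `HB(1)`, then `φ` is a rotation. -/
theorem stmt5 (φ : ℂ → ℂ) (hφ : IsSelfMap φ) (h0 : φ 0 = 0)
    (huniv : InjOn φ unitDisk) (hiso : IsIsometryOn 1 φ) :
    IsRotation φ :=
  isRotation_of_norm_deriv_zero_eq_one hφ h0
    (norm_deriv_zero_eq_one_of_hbSemi_eq_one hφ h0 huniv (hiso.hbSemi_one_eq_one h0))
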